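/- For k ≥ 4 and n ≥ 2, sg(G_{k,n}) = C(k,2)·(n−1) + k, where G_{k,n} is the graph obtained from K_k by replacing every edge with n internally disjoint paths of length 2 and then adding one universal vertex, and C(k,2) = k(k−1)/2. -/

import Mathlib

open SimpleGraph

/-- A choice of one fixed shortest path (geodesic) between each pair of vertices,
symmetric in the sense that the path from `v` to `u` is the reverse of the one
from `u` to `v`. -/
def StrongGeodeticChoice {V : Type*} (G : SimpleGraph V) (p : ∀ u v : V, G.Walk u v) : Prop :=
  ∀ u v : V, (p u v).IsPath ∧ (p u v).length = G.dist u v ∧ p v u = (p u v).reverse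

/-- `S` is a strong geodetic set of `G`: one can fix one shortest path between each
pair of vertices of `S` so that every vertex of `G` lies on some fixed path. -/
def IsStrongGeodeticSet {V : Type*} (G : SimpleGraph V) (S : Set V) : Prop :=
  ∃ p : ∀ u v : V, G.Walk u v, StrongGeodeticChoice G p ∧
    ∀ w : V, ∃ u ∈ S, ∃ v ∈ S, w ∈ (p u v).support

/-- The strong geodetic number of `G`. -/
noncomputable def sg {V : Type*} (G : SimpleGraph V) : ℕ :=
  sInf {n | ∃ S : Set V, S.ncard = n ∧ IsStrongGeodeticSet G S}

/-- The strong geodetic core number of `G`: the minimum, over minimum strong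
geodetic sets `S` together with a choice of fixed geodesics witnessing them,
of the size of a subset `X ⊆ S` such that the fixed paths with an endpoint in `X`
already cover all vertices. -/
noncomputable def sgc {V : Type*} (G : SimpleGraph V) : ℕ :=
  sInf {k | ∃ (S X : Set V) (p : ∀ u v : V, G.Walk u v),
    StrongGeodeticChoice G p ∧ S.ncard = sg G ∧
    (∀ w : V, ∃ u ∈ S, ∃ v ∈ S, w ∈ (p u v).support) ∧
    X ⊆ S ∧ X.ncard = k ∧
    (∀ w : V, ∃ u ∈ X, ∃ v ∈ S, w ∈ (p u v).support)}

/-- `A` is a geodetic set: every vertex lies on some shortest path between two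
vertices of `A`. -/
def IsGeodeticSet {V : Type*} (G : SimpleGraph V) (A : Set V) : Prop :=
  ∀ w : V, ∃ u ∈ A, ∃ v ∈ A, ∃ q : G.Walk u v, q.length = G.dist u v ∧ w ∈ q.support

/-- The geodetic number of `G`. -/
noncomputable def geodeticNumber {V : Type*} (G : SimpleGraph V) : ℕ :=
  sInf {n | ∃ A : Set V, A.ncard = n ∧ IsGeodeticSet G A}

/-- The graph `G_{k,n}`: obtained from `K_k` by replacing every edge with `n`
internally disjoint paths of length 2 and adding one universal vertex.
Vertices: the `k` original vertices, the subdivision vertices `x_{ij}^{(l)}`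
(indexed by an ordered pair `i < j` and `l ∈ Fin n`), and the universal vertex. -/
def Gkn (k n : ℕ) :
    SimpleGraph (Fin k ⊕ ({p : Fin k × Fin k // p.1 < p.2} × Fin n ⊕ Unit)) :=
  SimpleGraph.fromRel (fun a b =>
    match a, b with
    | Sum.inl i, Sum.inr (Sum.inl m) => i = m.1.1.1 ∨ i = m.1.1.2
    | _, Sum.inr (Sum.inr _) => True
    | _, _ => False)


/-!
The neighbours of a subdivision vertex `x_{ij}^{(l)}` are `x_i`, `x_j` and the hub `u`, and the
graph has diameter 2. So if `x_{ij}^{(l)}` is missing from a strong geodetic set `S`, it must be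
the middle vertex of the fixed geodesic between `x_i` and `x_j`, both of which lie in `S`; as this
geodesic has only one middle vertex, `S` misses at most one subdivision vertex per pair
`{x_i, x_j} ⊆ S`. With `a` branch vertices in `S` this gives
`|S| ≥ a + C(k,2) n - C(a,2) ≥ C(k,2) (n - 1) + k` for `k ≥ 3`.
Equality is attained by all vertices except the hub and one chosen `x_{ij}^{(l₀)}` per pair:
route `x_i x_j` through `x_{ij}^{(l₀)}` and every other non-adjacent pair through the hub.
-/

namespace SimpleGraph

variable {V : Type*} {G : SimpleGraph V}

lemma Walk.eq_cons_cons_of_mem_support {u v w : V} (W : G.Walk u v) (hl : W.length ≤ 2)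
    (hw : w ∈ W.support) (hu : w ≠ u) (hv : w ≠ v) :
    ∃ (h₁ : G.Adj u w) (h₂ : G.Adj w v), W = .cons h₁ (.cons h₂ .nil) := by
  match W with
  | .nil => simp_all
  | .cons _ .nil => simp_all
  | .cons h₁ (.cons h₂ .nil) =>
    obtain rfl : w = _ := by simpa [hu, hv] using hw
    exact ⟨h₁, h₂, rfl⟩
  | .cons _ (.cons _ (.cons _ _)) => simp at hl

lemma Walk.eq_of_mem_support_of_length_le_two {u v w w' : V} (W : G.Walk u v)
    (hl : W.length ≤ 2) (hw : w ∈ W.support) (hu : w ≠ u) (hv : w ≠ v)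
    (hw' : w' ∈ W.support) (hu' : w' ≠ u) (hv' : w' ≠ v) : w' = w := by
  obtain ⟨_, _, rfl⟩ := W.eq_cons_cons_of_mem_support hl hw hu hv
  simpa [hu', hv'] using hw'

lemma dist_le_two_of_forall_adj {c : V} (hc : ∀ v, v ≠ c → G.Adj v c) (u v : V) :
    G.dist u v ≤ 2 := by
  have walk_to_c (x : V) : ∃ W : G.Walk x c, W.length ≤ 1 := by
    by_cases hx : x = c
    · exact ⟨hx ▸ .nil, by subst hx; simp⟩
    · exact ⟨.cons (hc x hx) .nil, by simp⟩
  obtain ⟨W₁, h₁⟩ := walk_to_c u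
  obtain ⟨W₂, h₂⟩ := walk_to_c v
  calc G.dist u v ≤ (W₁.append W₂.reverse).length := dist_le _
    _ ≤ 2 := by rw [Walk.length_append, Walk.length_reverse]; omega

lemma dist_eq_two_of_adj_of_adj {u v w : V} (huv : u ≠ v) (hadj : ¬G.Adj u v)
    (hu : G.Adj u w) (hv : G.Adj w v) : G.dist u v = 2 := by
  simp [dist, edist_eq_two_iff.mpr ⟨huv, hadj, w, hu, hv.symm⟩]

variable {p : ∀ u v : V, G.Walk u v}

lemma StrongGeodeticChoice.adj_of_mem_support (hp : StrongGeodeticChoice G p) {u v w : V}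
    (hd : G.dist u v ≤ 2) (hw : w ∈ (p u v).support) (hu : w ≠ u) (hv : w ≠ v) :
    G.Adj u w ∧ G.Adj w v ∧ u ≠ v ∧ ¬G.Adj u v := by
  obtain ⟨-, hlen, -⟩ := hp u v
  obtain ⟨h₁, h₂, hW⟩ := (p u v).eq_cons_cons_of_mem_support (hlen ▸ hd) hw hu hv
  have h2 : G.dist u v = 2 := by rw [← hlen, hW]; rfl
  refine ⟨h₁, h₂, ?_, fun h ↦ ?_⟩
  · rintro rfl
    simp at h2
  · rw [dist_eq_one_iff_adj.mpr h] at h2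
    omega

section Midpoint

variable {m : V → V → V} (hm : ∀ a b, a ≠ b → ¬G.Adj a b → G.Adj a (m a b) ∧ G.Adj (m a b) b)

open Classical in
noncomputable def midpointWalk (a b : V) : G.Walk a b :=
  if h : a = b then h ▸ .nil
  else if hab : G.Adj a b then .cons hab .nil
  else .cons (hm a b h hab).1 (.cons (hm a b h hab).2 .nil)

lemma midpointWalk_self (a : V) : midpointWalk hm a a = .nil := by
  simp [midpointWalk]

lemma midpointWalk_of_adj {a b : V} (h : G.Adj a b) : midpointWalk hm a b = .cons h .nil := by
  simp [midpointWalk, h, h.ne]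

lemma midpointWalk_of_not_adj {a b : V} (h : a ≠ b) (hab : ¬G.Adj a b) :
    midpointWalk hm a b = .cons (hm a b h hab).1 (.cons (hm a b h hab).2 .nil) := by
  simp [midpointWalk, h, hab]

lemma mem_support_midpointWalk {a b : V} (h : a ≠ b) (hab : ¬G.Adj a b) :
    m a b ∈ (midpointWalk hm a b).support := by
  simp [midpointWalk_of_not_adj hm h hab]

theorem strongGeodeticChoice_midpointWalk (hsymm : ∀ a b, m a b = m b a) :
    StrongGeodeticChoice G (midpointWalk hm) := by
  intro a b
  by_cases h : a = b
  · subst h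
    simp [midpointWalk_self]
  by_cases hab : G.Adj a b
  · simp [midpointWalk_of_adj hm hab, midpointWalk_of_adj hm hab.symm, hab.ne,
      dist_eq_one_iff_adj.mpr hab]
  have hba : ¬G.Adj b a := fun h ↦ hab h.symm
  obtain ⟨ha, hb⟩ := hm a b h hab
  rw [midpointWalk_of_not_adj hm h hab, midpointWalk_of_not_adj hm (Ne.symm h) hba]
  refine ⟨?_, ?_, ?_⟩
  · simp [ha.ne, hb.ne, h]
  · simp [dist_eq_two_of_adj_of_adj h hab ha hb]
  · exact Walk.ext_support (by simp [hsymm b a])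

end Midpoint

lemma sg_eq_of_isStrongGeodeticSet {S : Set V} {c : ℕ} (hS : IsStrongGeodeticSet G S)
    (hcard : S.ncard = c) (hmin : ∀ T, IsStrongGeodeticSet G T → c ≤ T.ncard) : sg G = c :=
  le_antisymm (Nat.sInf_le ⟨S, hcard, hS⟩)
    (le_csInf ⟨c, S, hcard, hS⟩ fun _ ⟨T, hT, hTS⟩ ↦ hT ▸ hmin T hTS)

end SimpleGraph

lemma Nat.add_choose_two_le {a k : ℕ} (hk : 3 ≤ k) (ha : a ≤ k) :
    k + a.choose 2 ≤ a + k.choose 2 := by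
  induction k, hk using Nat.le_induction with
  | base => interval_cases a <;> decide
  | succ k hk ih =>
    rcases ha.lt_or_eq with ha | rfl
    · have := ih (by omega)
      simp only [Nat.choose_succ_succ', Nat.choose_one_right, Nat.reduceAdd]
      omega
    · rfl

namespace Gkn

variable {k n : ℕ}

abbrev Pair (k : ℕ) := {p : Fin k × Fin k // p.1 < p.2}

abbrev Vertex (k n : ℕ) := Fin k ⊕ (Pair k × Fin n ⊕ Unit)

abbrev hub : Vertex k n := .inr (.inr ())

abbrev subdiv (q : Pair k) (l : Fin n) : Vertex k n := .inr (.inl (q, l))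

lemma card_pair : Fintype.card (Pair k) = k.choose 2 := by
  rw [Fintype.card_subtype, Fintype.card_product_filter_lt, Fintype.card_fin]

lemma not_adj_inl_inl (i j : Fin k) : ¬(Gkn k n).Adj (.inl i) (.inl j) := by
  simp [Gkn]

lemma adj_hub {v : Vertex k n} (hv : v ≠ hub) : (Gkn k n).Adj v hub := by
  rcases v with _ | _ | _ <;> simp_all [Gkn]

lemma adj_subdiv_iff {q : Pair k} {l : Fin n} {v : Vertex k n} :
    (Gkn k n).Adj (subdiv q l) v ↔ v = .inl q.1.1 ∨ v = .inl q.1.2 ∨ v = hub := by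
  rcases v with _ | _ | _ <;> simp [Gkn, eq_comm]

lemma dist_le_two (u v : Vertex k n) : (Gkn k n).dist u v ≤ 2 :=
  dist_le_two_of_forall_adj (fun _ ↦ adj_hub) u v

def mid (l₀ : Fin n) : Vertex k n → Vertex k n → Vertex k n
  | .inl i, .inl j =>
    if h : i < j then subdiv ⟨(i, j), h⟩ l₀ else if h : j < i then subdiv ⟨(j, i), h⟩ l₀ else hub
  | _, _ => hub

lemma mid_comm (l₀ : Fin n) (a b : Vertex k n) : mid l₀ a b = mid l₀ b a := by
  rcases a with i | _ <;> rcases b with j | _ <;> try rfl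
  rcases lt_trichotomy i j with h | rfl | h
  · simp [mid, h, h.not_gt]
  · rfl
  · simp [mid, h, h.not_gt]

lemma adj_mid (l₀ : Fin n) (a b : Vertex k n) (hne : a ≠ b) (hadj : ¬(Gkn k n).Adj a b) :
    (Gkn k n).Adj a (mid l₀ a b) ∧ (Gkn k n).Adj (mid l₀ a b) b := by
  have ha : a ≠ hub := by rintro rfl; exact hadj (adj_hub hne.symm).symm
  have hb : b ≠ hub := by rintro rfl; exact hadj (adj_hub hne)
  rcases a with i | _ <;> rcases b with j | _
  · have hij : i ≠ j := by rintro rfl; exact hne rfl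
    rcases hij.lt_or_gt with h | h
    · simp only [mid, dif_pos h]
      exact ⟨(adj_subdiv_iff.2 (by simp)).symm, adj_subdiv_iff.2 (by simp)⟩
    · simp only [mid, dif_neg h.not_gt, dif_pos h]
      exact ⟨(adj_subdiv_iff.2 (by simp)).symm, adj_subdiv_iff.2 (by simp)⟩
  all_goals exact ⟨adj_hub ha, (adj_hub hb).symm⟩

def strongGeodeticSet (l₀ : Fin n) : Set (Vertex k n) :=
  (insert hub (Set.range (subdiv · l₀)))ᶜ

lemma ncard_strongGeodeticSet (l₀ : Fin n) :
    (strongGeodeticSet (k := k) l₀).ncard = k.choose 2 * (n - 1) + k := by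
  have hinj : Function.Injective (subdiv (k := k) · l₀) := fun q q' h ↦ by simpa using h
  rw [strongGeodeticSet, Set.ncard_compl, Set.ncard_insert_of_notMem (by simp),
    Set.ncard_range_of_injective hinj, Nat.card_eq_fintype_card, Nat.card_eq_fintype_card]
  simp only [Fintype.card_sum, Fintype.card_prod, Fintype.card_fin, Fintype.card_unit, card_pair]
  have := Nat.le_mul_of_pos_right (k.choose 2) l₀.pos
  rw [Nat.mul_sub_one]
  omega

theorem isStrongGeodeticSet_strongGeodeticSet (hk : 3 ≤ k) (hn : 2 ≤ n) (l₀ : Fin n) :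
    IsStrongGeodeticSet (Gkn k n) (strongGeodeticSet l₀) := by
  refine ⟨midpointWalk (adj_mid l₀), strongGeodeticChoice_midpointWalk _ (mid_comm l₀),
    fun w ↦ ?_⟩
  by_cases hw : w ∈ strongGeodeticSet l₀
  · exact ⟨w, hw, w, hw, Walk.start_mem_support _⟩
  simp only [strongGeodeticSet, Set.mem_compl_iff, Set.mem_insert_iff, Set.mem_range,
    not_not] at hw
  rcases hw with rfl | ⟨q, rfl⟩
  · have : Nontrivial (Fin n) := Fin.nontrivial_iff_two_le.mpr hn
    obtain ⟨l₁, hl₁⟩ := exists_ne l₀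
    obtain ⟨q, q', hq⟩ := Fintype.exists_pair_of_one_lt_card (α := Pair k) <| by
      rw [card_pair]
      exact lt_of_lt_of_le (by decide) (Nat.choose_le_choose 2 hk)
    have hne : subdiv q l₁ ≠ subdiv q' l₁ := by simpa using hq
    have hadj : ¬(Gkn k n).Adj (subdiv q l₁) (subdiv q' l₁) := by simp [adj_subdiv_iff]
    exact ⟨_, by simp [strongGeodeticSet, hl₁.symm], _, by simp [strongGeodeticSet, hl₁.symm],
      mem_support_midpointWalk (adj_mid l₀) hne hadj⟩
  · have hne : (.inl q.1.1 : Vertex k n) ≠ .inl q.1.2 := by simpa using q.2.ne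
    have hmid : mid l₀ (.inl q.1.1 : Vertex k n) (.inl q.1.2) = subdiv q l₀ := by simp [mid, q.2]
    refine ⟨.inl q.1.1, by simp [strongGeodeticSet], .inl q.1.2, by simp [strongGeodeticSet], ?_⟩
    rw [← hmid]
    exact mem_support_midpointWalk (adj_mid l₀) hne (not_adj_inl_inl _ _)

section Covering

variable {S : Set (Vertex k n)} {p : ∀ u v : Vertex k n, (Gkn k n).Walk u v}

lemma mem_support_of_subdiv_notMem (hp : StrongGeodeticChoice (Gkn k n) p)
    (hcov : ∀ w, ∃ u ∈ S, ∃ v ∈ S, w ∈ (p u v).support) {q : Pair k} {l : Fin n}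
    (h : subdiv q l ∉ S) :
    .inl q.1.1 ∈ S ∧ .inl q.1.2 ∈ S ∧ subdiv q l ∈ (p (.inl q.1.1) (.inl q.1.2)).support := by
  obtain ⟨u, hu, v, hv, hw⟩ := hcov (subdiv q l)
  obtain ⟨hwu, hwv⟩ : subdiv q l ≠ u ∧ subdiv q l ≠ v :=
    ⟨by rintro rfl; exact h hu, by rintro rfl; exact h hv⟩
  obtain ⟨hu', hv', huv, hadj⟩ := hp.adj_of_mem_support (dist_le_two u v) hw hwu hwv
  -- distinct non-adjacent neighbours of `x_{ij}^{(l)}` can only be `x_i` and `x_j`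
  rcases adj_subdiv_iff.1 hu'.symm with rfl | rfl | rfl <;>
    rcases adj_subdiv_iff.1 hv' with rfl | rfl | rfl
  all_goals first
    | exact absurd rfl huv
    | exact absurd (adj_hub (by simp)) hadj
    | exact absurd (adj_hub (by simp)).symm hadj
    | exact ⟨hu, hv, hw⟩
    | exact ⟨hv, hu, by rwa [(hp _ _).2.2, Walk.support_reverse, List.mem_reverse]⟩

lemma eq_of_subdiv_notMem (hp : StrongGeodeticChoice (Gkn k n) p)
    (hcov : ∀ w, ∃ u ∈ S, ∃ v ∈ S, w ∈ (p u v).support) {q : Pair k} {l l' : Fin n}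
    (h : subdiv q l ∉ S) (h' : subdiv q l' ∉ S) : l = l' := by
  obtain ⟨-, -, hw⟩ := mem_support_of_subdiv_notMem hp hcov h
  obtain ⟨-, -, hw'⟩ := mem_support_of_subdiv_notMem hp hcov h'
  have := Walk.eq_of_mem_support_of_length_le_two _ ((hp _ _).2.1 ▸ dist_le_two _ _)
    hw (by simp) (by simp) hw' (by simp) (by simp)
  simpa [eq_comm] using this

end Covering

open Finset in
theorem le_ncard_of_isStrongGeodeticSet (hk : 3 ≤ k) (hn : 1 ≤ n) {S : Set (Vertex k n)}
    (hS : IsStrongGeodeticSet (Gkn k n) S) : k.choose 2 * (n - 1) + k ≤ S.ncard := by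
  classical
  obtain ⟨p, hp, hcov⟩ := hS
  set A : Finset (Fin k) := {i | .inl i ∈ S}
  set T : Finset (Pair k × Fin n) := {m | subdiv m.1 m.2 ∉ S}
  have hT : #T ≤ (#A).choose 2 := by
    rw [← card_product_filter_lt]
    refine card_le_card_of_injOn (fun m ↦ m.1.1) (fun m hm ↦ ?_) (fun m hm m' hm' h ↦ ?_)
    · have := mem_support_of_subdiv_notMem hp hcov (mem_filter.1 hm).2
      simp [A, this.1, this.2.1, m.1.2]
    · obtain ⟨q, l⟩ := m
      obtain ⟨q', l'⟩ := m'
      obtain rfl : q = q' := Subtype.ext h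
      simp only [T, coe_filter, mem_univ, true_and, Set.mem_ofPred_eq] at hm hm'
      rw [eq_of_subdiv_notMem hp hcov hm hm']
  have hST : #A + #Tᶜ ≤ S.ncard :=
    calc #A + #Tᶜ = #(A.disjSum (Tᶜ.disjSum ∅)) := by simp [card_disjSum]
      _ ≤ #S.toFinset := card_le_card (by rintro (i | m | u) <;> simp [A, T])
      _ = S.ncard := (Set.ncard_eq_toFinset_card' S).symm
  have hTc : #Tᶜ = k.choose 2 * n - #T := by simp [card_compl, card_pair]
  have hA : #A ≤ k := by simpa using card_le_univ A
  have hTle : #T ≤ k.choose 2 * n := by simpa [card_pair] using card_le_univ T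
  have := Nat.add_choose_two_le hk hA
  have : k.choose 2 * n = k.choose 2 * (n - 1) + k.choose 2 := by
    rw [Nat.mul_sub_one, Nat.sub_add_cancel (Nat.le_mul_of_pos_right _ hn)]
  omega

end Gkn

theorem stmt17 (k n : ℕ) (hk : 4 ≤ k) (hn : 2 ≤ n) :
    sg (Gkn k n) = k.choose 2 * (n - 1) + k :=
  sg_eq_of_isStrongGeodeticSet
    (Gkn.isStrongGeodeticSet_strongGeodeticSet (by omega) hn ⟨0, by omega⟩)
    (Gkn.ncard_strongGeodeticSet _)
    fun _ hS ↦ Gkn.le_ncard_of_isStrongGeodeticSet (by omega) (by omega) hS
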